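/- Let a camera move with C² rotation R(t) ∈ SO(3) and translation 𝑻(t), R(0) = I, 𝑻(0) = 0, and let Γʷ(t) be a C² moving 3D point with camera coordinates Γ(t) = R(t)Γʷ(t) + 𝑻(t), depth ρ = ⟨e₃, Γ⟩ > 0, and image point γ = Γ/ρ. With Ω̂ = R′(0)R(0)ᵀ, Ω̂_t = (d/dt)(R′(t)R(t)ᵀ)|₀, V = 𝑻′(0), and V_t = 𝑻″(0), the second-order derivatives at t = 0 satisfy: ρ_tt = ρ⟨e₃, (Ω̂² + Ω̂_t)γ⟩ + 2⟨e₃, Ω̂Γʷ_t⟩ + ⟨e₃, Γʷ_tt⟩ + ⟨e₃, V_t⟩, and γ_tt = (Ω̂² + Ω̂_t)γ + (2/ρ)Ω̂Γʷ_t + (1/ρ)Γʷ_tt + (1/ρ)V_t − (2ρ_t/ρ)γ_t − (ρ_tt/ρ)γ. -/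

import Mathlib

/-!
Differentiate the two descriptions `Γ = R Γʷ + 𝑻` and `Γ = ρ γ` of the camera coordinates twice
and compare them at `t = 0`. Differentiating `R Rᵀ = I` at `R(0) = I` shows that `Ω̂ = R′(0)` is
skew, so the derivative `R″Rᵀ + R′R′ᵀ` of `R′Rᵀ` gives `R″(0) = Ω̂² + Ω̂_t`. The depth equation is the
`e₃`-component of `(RΓʷ + 𝑻)″(0)`, and the image equation is the comparison
`ρ″γ + 2ρ′γ′ + ργ″ = (RΓʷ + 𝑻)″` solved for `γ″`.
-/

open scoped RealInnerProductSpace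

attribute [local instance] Matrix.frobeniusNormedAddCommGroup Matrix.frobeniusNormedSpace

noncomputable section

/-- ℝ³ with the Euclidean inner product. -/
abbrev V3 : Type := EuclideanSpace ℝ (Fin 3)

/-- The third standard basis vector e₃ = (0,0,1). -/
def e3 : V3 := WithLp.toLp 2 ![0, 0, 1]

/-- Matrix–vector multiplication, valued in ℝ³ with the Euclidean structure. -/
def mulV (A : Matrix (Fin 3) (Fin 3) ℝ) (v : V3) : V3 := WithLp.toLp 2 (A.mulVec v)

section FiniteDimensional

variable {𝕜 E F G : Type*} [NontriviallyNormedField 𝕜] [CompleteSpace 𝕜]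
  [NormedAddCommGroup E] [NormedSpace 𝕜 E] [FiniteDimensional 𝕜 E]
  [NormedAddCommGroup F] [NormedSpace 𝕜 F] [FiniteDimensional 𝕜 F]
  [NormedAddCommGroup G] [NormedSpace 𝕜 G]
  {u : 𝕜 → E} {v : 𝕜 → F} {u' : E} {v' : F} {t : 𝕜}

theorem LinearMap.hasDerivAt_comp_of_finiteDimensional (f : E →ₗ[𝕜] G) (hu : HasDerivAt u u' t) :
    HasDerivAt (fun s => f (u s)) (f u') t :=
  (LinearMap.toContinuousLinearMap f).hasFDerivAt.comp_hasDerivAt t hu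

theorem LinearMap.hasDerivAt_of_bilinear_of_finiteDimensional (B : E →ₗ[𝕜] F →ₗ[𝕜] G)
    (hu : HasDerivAt u u' t) (hv : HasDerivAt v v' t) :
    HasDerivAt (fun s => B (u s) (v s)) (B u' (v t) + B (u t) v') t := by
  let Bc : E →L[𝕜] F →L[𝕜] G :=
    LinearMap.toContinuousLinearMap (LinearMap.toContinuousLinearMap.toLinearMap ∘ₗ B)
  rw [add_comm]
  exact Bc.hasDerivAt_of_bilinear (fun _ => hu) (fun _ => hv)

theorem LinearMap.hasDerivAt_leibniz_of_finiteDimensional (B : E →ₗ[𝕜] F →ₗ[𝕜] G)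
    {u₁ : 𝕜 → E} {v₁ : 𝕜 → F} {u₂ : E} {v₂ : F}
    (hu : HasDerivAt u (u₁ t) t) (hu₁ : HasDerivAt u₁ u₂ t)
    (hv : HasDerivAt v (v₁ t) t) (hv₁ : HasDerivAt v₁ v₂ t) :
    HasDerivAt (fun s => B (u₁ s) (v s) + B (u s) (v₁ s))
      (B u₂ (v t) + (2 : 𝕜) • B (u₁ t) (v₁ t) + B (u t) v₂) t := by
  convert (B.hasDerivAt_of_bilinear_of_finiteDimensional hu₁ hv).fun_add
    (B.hasDerivAt_of_bilinear_of_finiteDimensional hu hv₁) using 1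
  rw [two_smul]
  abel

end FiniteDimensional

theorem hasDerivAt_second_unique {𝕜 E : Type*} [NontriviallyNormedField 𝕜]
    [NormedAddCommGroup E] [NormedSpace 𝕜 E] {f f₁ g₁ : 𝕜 → E} {a b : E} {t : 𝕜}
    (hf : ∀ s, HasDerivAt f (f₁ s) s) (hg : ∀ s, HasDerivAt f (g₁ s) s)
    (hf₁ : HasDerivAt f₁ a t) (hg₁ : HasDerivAt g₁ b t) : a = b := by
  have : f₁ = g₁ := funext fun s => (hf s).unique (hg s)
  exact hf₁.unique (this ▸ hg₁)

def mulVBilin : Matrix (Fin 3) (Fin 3) ℝ →ₗ[ℝ] V3 →ₗ[ℝ] V3 :=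
  ((Matrix.mulVecBilin ℝ ℝ).compl₂ (WithLp.linearEquiv 2 ℝ (Fin 3 → ℝ)).toLinearMap).compr₂
    (WithLp.linearEquiv 2 ℝ (Fin 3 → ℝ)).symm.toLinearMap

theorem hasDerivAt_mulV {A : ℝ → Matrix (Fin 3) (Fin 3) ℝ} {A' : Matrix (Fin 3) (Fin 3) ℝ}
    {x : ℝ → V3} {x' : V3} {t : ℝ} (hA : HasDerivAt A A' t) (hx : HasDerivAt x x' t) :
    HasDerivAt (fun s => mulV (A s) (x s)) (mulV A' (x t) + mulV (A t) x') t :=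
  mulVBilin.hasDerivAt_of_bilinear_of_finiteDimensional hA hx

theorem hasDerivAt_mulV_leibniz {A A₁ : ℝ → Matrix (Fin 3) (Fin 3) ℝ}
    {A₂ : Matrix (Fin 3) (Fin 3) ℝ} {x x₁ : ℝ → V3} {x₂ : V3} {t : ℝ}
    (hA : HasDerivAt A (A₁ t) t) (hA₁ : HasDerivAt A₁ A₂ t)
    (hx : HasDerivAt x (x₁ t) t) (hx₁ : HasDerivAt x₁ x₂ t) :
    HasDerivAt (fun s => mulV (A₁ s) (x s) + mulV (A s) (x₁ s))
      (mulV A₂ (x t) + (2 : ℝ) • mulV (A₁ t) (x₁ t) + mulV (A t) x₂) t :=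
  mulVBilin.hasDerivAt_leibniz_of_finiteDimensional hA hA₁ hx hx₁

theorem one_mulV (v : V3) : mulV 1 v = v := by simp [mulV]

theorem mulV_smul (A : Matrix (Fin 3) (Fin 3) ℝ) (c : ℝ) (v : V3) :
    mulV A (c • v) = c • mulV A v :=
  (mulVBilin A).map_smul c v

open scoped Matrix

section Orthogonal

variable {n : Type*} [Fintype n] {R R' : ℝ → Matrix n n ℝ} {t : ℝ}

theorem Matrix.hasDerivAt_transpose {A : ℝ → Matrix n n ℝ} {A' : Matrix n n ℝ}
    (hA : HasDerivAt A A' t) : HasDerivAt (fun s => (A s)ᵀ) A'ᵀ t :=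
  (Matrix.transposeLinearEquiv n n ℝ ℝ).toLinearMap.hasDerivAt_comp_of_finiteDimensional hA

theorem Matrix.hasDerivAt_mul {A B : ℝ → Matrix n n ℝ} {A' B' : Matrix n n ℝ}
    (hA : HasDerivAt A A' t) (hB : HasDerivAt B B' t) :
    HasDerivAt (fun s => A s * B s) (A' * B t + A t * B') t :=
  (LinearMap.mul ℝ (Matrix n n ℝ)).hasDerivAt_of_bilinear_of_finiteDimensional hA hB

theorem transpose_eq_neg_of_hasDerivAt_orthogonal [DecidableEq n] {A : Matrix n n ℝ}
    (horth : ∀ s, R s * (R s)ᵀ = 1) (hR1 : R t = 1) (hR : HasDerivAt R A t) : Aᵀ = -A := by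
  have hconst : HasDerivAt (fun s => R s * (R s)ᵀ) 0 t := by
    rw [funext horth]
    exact hasDerivAt_const t _
  have h := (Matrix.hasDerivAt_mul hR (Matrix.hasDerivAt_transpose hR)).unique hconst
  rw [hR1, Matrix.transpose_one, mul_one, one_mul] at h
  exact eq_neg_of_add_eq_zero_right h

theorem eq_mul_self_add_of_hasDerivAt_angularVelocity [DecidableEq n] {R'' Ωt : Matrix n n ℝ}
    (horth : ∀ s, R s * (R s)ᵀ = 1) (hR1 : R t = 1) (hR : HasDerivAt R (R' t) t)
    (hR' : HasDerivAt R' R'' t) (hΩ : HasDerivAt (fun s => R' s * (R s)ᵀ) Ωt t) :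
    R'' = R' t * R' t + Ωt := by
  have h := hΩ.unique (Matrix.hasDerivAt_mul hR' (Matrix.hasDerivAt_transpose hR))
  rw [hR1, Matrix.transpose_one, mul_one, transpose_eq_neg_of_hasDerivAt_orthogonal horth hR1 hR,
    mul_neg] at h
  rw [h]
  abel

end Orthogonal

theorem moving_point_second_order_general
    (R R' R'' : ℝ → Matrix (Fin 3) (Fin 3) ℝ)
    (Ωht : Matrix (Fin 3) (Fin 3) ℝ)
    (Tr Tr' Tr'' : ℝ → V3)
    (Γw Γw' Γw'' : ℝ → V3)
    (Γ : ℝ → V3) (ρ ρ' ρ'' : ℝ → ℝ) (γ γ' γ'' : ℝ → V3)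
    -- camera motion: R(t) ∈ SO(3), C², with R(0) = I, 𝑻(0) = 0
    (hRorth : ∀ t, R t * (R t).transpose = 1)
    (hR' : ∀ t, HasDerivAt R (R' t) t)
    (hR'' : ∀ t, HasDerivAt R' (R'' t) t)
    (hR0 : R 0 = 1)
    -- Ω̂_t is the derivative at 0 of the angular-velocity matrix t ↦ R′(t)R(t)ᵀ
    (hΩht : HasDerivAt (fun t => R' t * (R t).transpose) Ωht 0)
    (hTr' : ∀ t, HasDerivAt Tr (Tr' t) t)
    (hTr'' : ∀ t, HasDerivAt Tr' (Tr'' t) t)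
    (hTr0 : Tr 0 = 0)
    -- moving point: C² in world coordinates
    (hΓw' : ∀ t, HasDerivAt Γw (Γw' t) t)
    (hΓw'' : ∀ t, HasDerivAt Γw' (Γw'' t) t)
    -- camera coordinates, depth and image
    (hΓ : ∀ t, Γ t = mulV (R t) (Γw t) + Tr t)
    (hρ : ∀ t, ρ t = ⟪e3, Γ t⟫)
    (hρpos : ∀ t, 0 < ρ t)
    (hρ' : ∀ t, HasDerivAt ρ (ρ' t) t)
    (hρ'' : ∀ t, HasDerivAt ρ' (ρ'' t) t)
    (hγ : ∀ t, γ t = (ρ t)⁻¹ • Γ t)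
    (hγ' : ∀ t, HasDerivAt γ (γ' t) t)
    (hγ'' : ∀ t, HasDerivAt γ' (γ'' t) t) :
    -- conclusion at t = 0, with Ω̂ = R′(0)R(0)ᵀ, V = 𝑻′(0), V_t = 𝑻″(0)
    (let Ωh := R' 0 * (R 0).transpose
     ρ'' 0 = ρ 0 * ⟪e3, mulV (Ωh * Ωh + Ωht) (γ 0)⟫
          + 2 * ⟪e3, mulV Ωh (Γw' 0)⟫ + ⟪e3, Γw'' 0⟫ + ⟪e3, Tr'' 0⟫
     ∧ γ'' 0 = mulV (Ωh * Ωh + Ωht) (γ 0)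
          + (2 / ρ 0) • mulV Ωh (Γw' 0)
          + (ρ 0)⁻¹ • Γw'' 0
          + (ρ 0)⁻¹ • Tr'' 0
          - (2 * ρ' 0 / ρ 0) • γ' 0
          - (ρ'' 0 / ρ 0) • γ 0) := by
  intro Ωh
  have hΩh : Ωh = R' 0 := by simp [Ωh, hR0]
  have hR''0 : R'' 0 = Ωh * Ωh + Ωht :=
    hΩh ▸ eq_mul_self_add_of_hasDerivAt_angularVelocity hRorth hR0 (hR' 0) (hR'' 0) hΩht
  have hΓργ (s : ℝ) : Γ s = ρ s • γ s := by
    rw [hγ, smul_smul, mul_inv_cancel₀ (hρpos s).ne', one_smul]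
  have hΓw0 : Γw 0 = ρ 0 • γ 0 := by simpa [hR0, one_mulV, hTr0, hΓργ] using (hΓ 0).symm
  have hΓ₁ (s : ℝ) : HasDerivAt Γ (mulV (R' s) (Γw s) + mulV (R s) (Γw' s) + Tr' s) s :=
    funext hΓ ▸ (hasDerivAt_mulV (hR' s) (hΓw' s)).add (hTr' s)
  have hΓ₂ := (hasDerivAt_mulV_leibniz (hR' 0) (hR'' 0) (hΓw' 0) (hΓw'' 0)).add (hTr'' 0)
  have hΓ₁' (s : ℝ) : HasDerivAt Γ (ρ s • γ' s + ρ' s • γ s) s :=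
    funext hΓργ ▸ (hρ' s).smul (hγ' s)
  have hΓ₂' := ((hρ' 0).smul (hγ'' 0)).add ((hρ'' 0).smul (hγ' 0))
  have hΓ₂_eq := hasDerivAt_second_unique hΓ₁' hΓ₁ hΓ₂' hΓ₂
  have hρ''_eq := hasDerivAt_second_unique hρ'
    (fun s => funext hρ ▸ (innerSL ℝ e3).hasFDerivAt.comp_hasDerivAt s (hΓ₁ s)) (hρ'' 0)
    ((innerSL ℝ e3).hasFDerivAt.comp_hasDerivAt 0 hΓ₂)
  rw [hR0, one_mulV, hΓw0, mulV_smul] at hΓ₂_eq hρ''_eq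
  rw [← hR''0, hΩh]
  have hρ0 : ρ 0 ≠ 0 := (hρpos 0).ne'
  constructor
  · simp only [hρ''_eq, innerSL_apply_apply, inner_add_right, real_inner_smul_right]
  · have hργ'' : ρ 0 • γ'' 0 = ρ 0 • mulV (R'' 0) (γ 0) + (2 : ℝ) • mulV (R' 0) (Γw' 0)
        + Γw'' 0 + Tr'' 0 - (2 * ρ' 0) • γ' 0 - ρ'' 0 • γ 0 := by
      linear_combination (norm := module) hΓ₂_eq
    refine smul_right_injective V3 hρ0 ?_
    beta_reduce
    rw [hργ'']
    match_scalars <;> field_simp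

/-- second-order differential relations for a moving 3D point seen
by a moving camera: at `t = 0`,
`ρ_tt = ρ⟨e₃,(Ω̂² + Ω̂_t)γ⟩ + 2⟨e₃,Ω̂Γʷ_t⟩ + ⟨e₃,Γʷ_tt⟩ + ⟨e₃,V_t⟩` and
`γ_tt = (Ω̂² + Ω̂_t)γ + (2/ρ)Ω̂Γʷ_t + (1/ρ)Γʷ_tt + (1/ρ)V_t − (2ρ_t/ρ)γ_t − (ρ_tt/ρ)γ`. -/
theorem moving_point_second_order
    (R R' R'' : ℝ → Matrix (Fin 3) (Fin 3) ℝ)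
    (Ωht : Matrix (Fin 3) (Fin 3) ℝ)
    (Tr Tr' Tr'' : ℝ → V3)
    (Γw Γw' Γw'' : ℝ → V3)
    (Γ : ℝ → V3) (ρ ρ' ρ'' : ℝ → ℝ) (γ γ' γ'' : ℝ → V3)
    -- camera motion: R(t) ∈ SO(3), C², with R(0) = I, 𝑻(0) = 0
    (hRorth : ∀ t, R t * (R t).transpose = 1)
    (hRdet : ∀ t, (R t).det = 1)
    (hR' : ∀ t, HasDerivAt R (R' t) t)
    (hR'' : ∀ t, HasDerivAt R' (R'' t) t)
    (hR0 : R 0 = 1)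
    -- Ω̂_t is the derivative at 0 of the angular-velocity matrix t ↦ R′(t)R(t)ᵀ
    (hΩht : HasDerivAt (fun t => R' t * (R t).transpose) Ωht 0)
    (hTr' : ∀ t, HasDerivAt Tr (Tr' t) t)
    (hTr'' : ∀ t, HasDerivAt Tr' (Tr'' t) t)
    (hTr0 : Tr 0 = 0)
    -- moving point: C² in world coordinates
    (hΓw' : ∀ t, HasDerivAt Γw (Γw' t) t)
    (hΓw'' : ∀ t, HasDerivAt Γw' (Γw'' t) t)
    -- camera coordinates, depth and image
    (hΓ : ∀ t, Γ t = mulV (R t) (Γw t) + Tr t)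
    (hρ : ∀ t, ρ t = ⟪e3, Γ t⟫)
    (hρpos : ∀ t, 0 < ρ t)
    (hρ' : ∀ t, HasDerivAt ρ (ρ' t) t)
    (hρ'' : ∀ t, HasDerivAt ρ' (ρ'' t) t)
    (hγ : ∀ t, γ t = (ρ t)⁻¹ • Γ t)
    (hγ' : ∀ t, HasDerivAt γ (γ' t) t)
    (hγ'' : ∀ t, HasDerivAt γ' (γ'' t) t) :
    -- conclusion at t = 0, with Ω̂ = R′(0)R(0)ᵀ, V = 𝑻′(0), V_t = 𝑻″(0)
    (let Ωh := R' 0 * (R 0).transpose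
     ρ'' 0 = ρ 0 * ⟪e3, mulV (Ωh * Ωh + Ωht) (γ 0)⟫
          + 2 * ⟪e3, mulV Ωh (Γw' 0)⟫ + ⟪e3, Γw'' 0⟫ + ⟪e3, Tr'' 0⟫
     ∧ γ'' 0 = mulV (Ωh * Ωh + Ωht) (γ 0)
          + (2 / ρ 0) • mulV Ωh (Γw' 0)
          + (ρ 0)⁻¹ • Γw'' 0
          + (ρ 0)⁻¹ • Tr'' 0
          - (2 * ρ' 0 / ρ 0) • γ' 0
          - (ρ'' 0 / ρ 0) • γ 0) :=
  moving_point_second_order_general R R' R'' Ωht Tr Tr' Tr'' Γw Γw' Γw'' Γ ρ ρ' ρ'' γ γ' γ'' hRorth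
    hR' hR'' hR0 hΩht hTr' hTr'' hTr0 hΓw' hΓw'' hΓ hρ hρpos hρ' hρ'' hγ hγ' hγ''
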